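/- For n ≥ 1, let A_n = P M P^n M P where P = [[1,1],[1,0]] and M = [[0,1],[1,1]]. Then A_n = [[5F_{n+1}, F_{n+1}+F_{n-1}],[F_{n+1}+F_{n-1}, F_{n-1}]], where F_j are the Fibonacci numbers (F_0 = 0, F_1 = 1). Consequently, setting α_n = 5F_{n+1} and β_n = F_{n+1}+F_{n-1}, one has β_n² ≡ (-1)^{n+1} (mod α_n). -/

import Mathlib

/-! `P M = [[1,2],[0,1]]` and `M P` is its transpose, so `A ↦ P M A M P` is a congruence by a
transvection. Applied to `Pⁿ = [[F_{n+1}, F_n],[F_n, F_{n-1}]]` it gives the matrix identity.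
Taking determinants (`det P = det M = -1`) gives `5 F_{n+1} F_{n-1} - βₙ² = (-1)ⁿ`, which is the
congruence. -/

/-- The matrix `P = [[1,1],[1,0]]`. -/
def Pm : Matrix (Fin 2) (Fin 2) ℤ := !![1, 1; 1, 0]

/-- The matrix `M = [[0,1],[1,1]]`. -/
def Mm : Matrix (Fin 2) (Fin 2) ℤ := !![0, 1; 1, 1]

open Matrix

lemma det_Pm : Pm.det = -1 := by
  simp [Pm, det_fin_two_of]

lemma det_Mm : Mm.det = -1 := by
  simp [Mm, det_fin_two_of]

lemma Pm_pow_succ (m : ℕ) :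
    Pm ^ (m + 1) = !![(Nat.fib (m + 2) : ℤ), (Nat.fib (m + 1) : ℤ);
      (Nat.fib (m + 1) : ℤ), (Nat.fib m : ℤ)] := by
  induction m with
  | zero => simp [Pm]
  | succ k ih =>
    rw [pow_succ, ih, Pm, mul_fin_two]
    ext i j
    fin_cases i <;> fin_cases j <;> simp [Nat.fib_add_two] <;> ring

lemma Pm_mul_Mm_mul_mul_Mm_mul_Pm (a b c : ℤ) :
    Pm * Mm * !![a, b; b, c] * Mm * Pm = !![a + 4 * b + 4 * c, b + 2 * c; b + 2 * c, c] := by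
  simp only [Pm, Mm, mul_fin_two]
  ext i j
  fin_cases i <;> fin_cases j <;> simp <;> ring

lemma Int.sq_modEq_neg_det_fin_two (a b c : ℤ) : b ^ 2 ≡ -!![a, b; b, c].det [ZMOD a] :=
  Int.modEq_iff_dvd.mpr ⟨-c, by rw [det_fin_two_of]; ring⟩

theorem PMPnMP_fibonacci (n : ℕ) (hn : 1 ≤ n) :
    Pm * Mm * Pm ^ n * Mm * Pm =
      !![5 * (Nat.fib (n + 1) : ℤ), (Nat.fib (n + 1) : ℤ) + (Nat.fib (n - 1) : ℤ);
         (Nat.fib (n + 1) : ℤ) + (Nat.fib (n - 1) : ℤ), (Nat.fib (n - 1) : ℤ)] ∧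
    ((Nat.fib (n + 1) : ℤ) + (Nat.fib (n - 1) : ℤ)) ^ 2 ≡
      (-1 : ℤ) ^ (n + 1) [ZMOD (5 * (Nat.fib (n + 1) : ℤ))] := by
  obtain ⟨m, rfl⟩ := Nat.exists_eq_add_of_le' hn
  rw [Nat.add_sub_cancel]
  set α : ℤ := 5 * Nat.fib (m + 2)
  set β : ℤ := Nat.fib (m + 2) + Nat.fib m
  have hA : Pm * Mm * Pm ^ (m + 1) * Mm * Pm = !![α, β; β, (Nat.fib m : ℤ)] := by
    rw [Pm_pow_succ, Pm_mul_Mm_mul_mul_Mm_mul_Pm]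
    ext i j
    fin_cases i <;> fin_cases j <;> simp [α, β, Nat.fib_add_two] <;> ring
  have hdet : !![α, β; β, (Nat.fib m : ℤ)].det = (-1) ^ (m + 1) := by
    rw [← hA]
    simp only [det_mul, det_pow, det_Pm, det_Mm]
    ring
  refine ⟨hA, ?_⟩
  have hcong := Int.sq_modEq_neg_det_fin_two α β (Nat.fib m)
  rwa [hdet, ← neg_one_mul, ← pow_succ'] at hcong
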